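/- arXiv:math/0309107 — 2 statements merged into one kernel-verified Lean document; each statement's English description precedes it below -/
import Mathlib

section
/- An external address s is exponentially bounded (i.e. t_s < ∞) if and only if there exists x ≥ 0 such that 2π|s_k| ≤ F^{k−1}(x) for all k ≥ 1, where F^{k−1} denotes the (k−1)-st iterate of F. -/
open Filter Topology ENNReal

noncomputable section

/-- The space of external addresses: integer sequences (indexed from 0, so index `k`
corresponds to the entry `s_{k+1}` of the paper) with the lexicographic order. -/
abbrev Addr : Type := Lex (ℕ → ℤ)

/-- The shift map `σ` on external addresses. -/
def shiftA (s : Addr) : Addr := toLex (fun n => ofLex s (n + 1))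

/-- The model growth function `F(t) = e^t - 1`. -/
def Fexp (t : ℝ) : ℝ := Real.exp t - 1

/-- The model map `𝓕(s,t) = (σ s, F t - 2π |s₂|)`. -/
def Fmod (p : Addr × ℝ) : Addr × ℝ :=
  (shiftA p.1, Fexp p.2 - 2 * Real.pi * |((ofLex p.1 1 : ℤ) : ℝ)|)

/-- The model set `X̄ = {(s,t) : T(𝓕ⁿ(s,t)) ≥ 0 for all n ≥ 0}`. -/
def Xbar : Set (Addr × ℝ) := {p | ∀ n : ℕ, 0 ≤ (Fmod^[n] p).2}

/-- The model escaping set `X = {(s,t) ∈ X̄ : T(𝓕ⁿ(s,t)) → ∞}`. -/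
def Xset : Set (Addr × ℝ) :=
  {p | p ∈ Xbar ∧ Tendsto (fun n : ℕ => (Fmod^[n] p).2) atTop atTop}

/-- The minimal potential `t_s ∈ [0,∞]` of an address (`∞` if `(s,t) ∉ X̄` for all `t ≥ 0`). -/
def tS (s : Addr) : ℝ≥0∞ :=
  sInf (ENNReal.ofReal '' {t : ℝ | 0 ≤ t ∧ (s, t) ∈ Xbar})

/-- The exponential map `E_κ(z) = e^z + κ`. -/
def Eexp (κ : ℂ) (z : ℂ) : ℂ := Complex.exp z + κ

/-- The escaping set `I(E_κ)`. -/
def escapingSet (κ : ℂ) : Set ℂ :=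
  {z | Tendsto (fun n : ℕ => ‖(Eexp κ)^[n] z‖) atTop atTop}

/-- The order topology induced by the lexicographic order on external addresses. -/
instance : TopologicalSpace Addr := Preorder.topology Addr
instance : OrderTopology Addr := ⟨rfl⟩

/-! Subtracting `2π|s_k|` only lowers the orbit, so `T(𝓕ⁿ(s,t)) ≤ Fⁿ(t)`; if the orbit stays
nonnegative, then `2π|s_{n+2}| ≤ F(T(𝓕ⁿ(s,t))) ≤ F^{n+1}(t)`. Conversely, if `2π|s_k| ≤ F^{k-1}(x)`,
start at `t = x + 2π`: since `F(a + 2π) ≥ 2F(a) + 2π` for `a ≥ 0`, the margin `2π` above `Fⁿ(x)`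
survives every step, so `T(𝓕ⁿ(s,t)) ≥ Fⁿ(x) + 2π ≥ 0`. -/

lemma Fexp_monotone : Monotone Fexp := fun _ _ h =>
  sub_le_sub_right (Real.exp_le_exp.2 h) 1

lemma Fexp_nonneg {x : ℝ} (hx : 0 ≤ x) : 0 ≤ Fexp x :=
  sub_nonneg.2 (Real.one_le_exp hx)

lemma mapsTo_Fexp_iterate_Ici (n : ℕ) : Set.MapsTo Fexp^[n] (Set.Ici 0) (Set.Ici 0) :=
  Set.MapsTo.iterate (fun _ hx => Fexp_nonneg hx) n

lemma two_mul_Fexp_add_two_pi_le {a : ℝ} (ha : 0 ≤ a) :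
    2 * Fexp a + 2 * Real.pi ≤ Fexp (a + 2 * Real.pi) := by
  have h1 : 1 ≤ Real.exp a := Real.one_le_exp ha
  have h2 : 2 * Real.pi + 1 ≤ Real.exp (2 * Real.pi) := by
    linarith [Real.add_one_le_exp (2 * Real.pi)]
  have h3 : 0 ≤ (Real.exp a - 1) * (2 * Real.pi - 1) :=
    mul_nonneg (by linarith) (by linarith [Real.pi_gt_three])
  simp only [Fexp, Real.exp_add]
  nlinarith [mul_le_mul_of_nonneg_left h2 (Real.exp_pos a).le]

lemma ofLex_Fmod_iterate_fst (p : Addr × ℝ) (n m : ℕ) :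
    ofLex (Fmod^[n] p).1 m = ofLex p.1 (m + n) := by
  induction n generalizing m with
  | zero => rfl
  | succ n ih =>
    rw [Function.iterate_succ_apply']
    exact (ih (m + 1)).trans (by rw [add_right_comm]; rfl)

lemma Fmod_iterate_succ_snd (p : Addr × ℝ) (n : ℕ) :
    (Fmod^[n + 1] p).2 =
      Fexp (Fmod^[n] p).2 - 2 * Real.pi * |((ofLex p.1 (n + 1) : ℤ) : ℝ)| := by
  rw [Function.iterate_succ_apply', Fmod, ofLex_Fmod_iterate_fst, add_comm]

lemma Fmod_iterate_snd_le_Fexp_iterate (p : Addr × ℝ) (n : ℕ) :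
    (Fmod^[n] p).2 ≤ Fexp^[n] p.2 := by
  induction n with
  | zero => rfl
  | succ n ih =>
    rw [Fmod_iterate_succ_snd, Function.iterate_succ_apply']
    have hstep : 0 ≤ 2 * Real.pi * |((ofLex p.1 (n + 1) : ℤ) : ℝ)| := by positivity
    linarith [Fexp_monotone ih]

lemma tS_ne_top_iff (s : Addr) : tS s ≠ ⊤ ↔ ∃ t, (s, t) ∈ Xbar := by
  constructor
  · intro h
    by_contra! hempty
    exact h (by simp [tS, fun t => hempty t])
  · rintro ⟨t, ht⟩
    exact ne_top_of_le_ne_top ofReal_ne_top (sInf_le ⟨t, ⟨ht 0, ht⟩, rfl⟩)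

lemma two_pi_abs_le_Fexp_iterate_of_mem_Xbar {s : Addr} {t : ℝ} (ht : (s, t) ∈ Xbar) (k : ℕ) :
    2 * Real.pi * |((ofLex s k : ℤ) : ℝ)| ≤
      Fexp^[k] (max t (2 * Real.pi * |((ofLex s 0 : ℤ) : ℝ)|)) := by
  cases k with
  | zero => exact le_max_right _ _
  | succ n =>
    have hstep := ht (n + 1)
    rw [Fmod_iterate_succ_snd] at hstep
    calc 2 * Real.pi * |((ofLex s (n + 1) : ℤ) : ℝ)|
        ≤ Fexp (Fmod^[n] (s, t)).2 := by linarith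
      _ ≤ Fexp (Fexp^[n] t) := Fexp_monotone (Fmod_iterate_snd_le_Fexp_iterate _ n)
      _ ≤ Fexp^[n + 1] (max t _) := by
        rw [Function.iterate_succ_apply']
        exact Fexp_monotone (Fexp_monotone.iterate n (le_max_left _ _))

lemma Fexp_iterate_add_two_pi_le {s : Addr} {x : ℝ} (hx : 0 ≤ x)
    (hs : ∀ k, 2 * Real.pi * |((ofLex s k : ℤ) : ℝ)| ≤ Fexp^[k] x) (n : ℕ) :
    Fexp^[n] x + 2 * Real.pi ≤ (Fmod^[n] (s, x + 2 * Real.pi)).2 := by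
  induction n with
  | zero => rfl
  | succ n ih =>
    rw [Fmod_iterate_succ_snd, Function.iterate_succ_apply']
    have hmargin := two_mul_Fexp_add_two_pi_le (mapsTo_Fexp_iterate_Ici n hx)
    have hs' := hs (n + 1)
    rw [Function.iterate_succ_apply'] at hs'
    linarith [Fexp_monotone ih]

lemma add_two_pi_mem_Xbar_of_two_pi_abs_le {s : Addr} {x : ℝ} (hx : 0 ≤ x)
    (hs : ∀ k, 2 * Real.pi * |((ofLex s k : ℤ) : ℝ)| ≤ Fexp^[k] x) :
    (s, x + 2 * Real.pi) ∈ Xbar := fun n => by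
  linarith [Fexp_iterate_add_two_pi_le hx hs n, Set.mem_Ici.1 (mapsTo_Fexp_iterate_Ici n hx),
    Real.pi_pos]

/-- An external address `s` is exponentially bounded (`t_s < ∞`) iff there exists `x ≥ 0`
with `2π |s_k| ≤ F^{k-1}(x)` for all `k ≥ 1` (here the paper's `s_k` is `ofLex s (k-1)`). -/
theorem exponentially_bounded_iff (s : Addr) :
    tS s ≠ ⊤ ↔ ∃ x : ℝ, 0 ≤ x ∧ ∀ k : ℕ, 1 ≤ k →
      2 * Real.pi * |((ofLex s (k - 1) : ℤ) : ℝ)| ≤ Fexp^[k - 1] x := by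
  have hshift : ∀ x, (∀ k : ℕ, 1 ≤ k →
      2 * Real.pi * |((ofLex s (k - 1) : ℤ) : ℝ)| ≤ Fexp^[k - 1] x) ↔
      ∀ k, 2 * Real.pi * |((ofLex s k : ℤ) : ℝ)| ≤ Fexp^[k] x :=
    fun x => ⟨fun h k => h (k + 1) k.succ_pos, fun h k _ => h (k - 1)⟩
  simp only [tS_ne_top_iff, hshift]
  constructor
  · rintro ⟨t, ht⟩
    exact ⟨_, (ht 0).trans (le_max_left _ _), two_pi_abs_le_Fexp_iterate_of_mem_Xbar ht⟩
  · rintro ⟨x, hx, hs⟩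
    exact ⟨_, add_two_pi_mem_Xbar_of_two_pi_abs_le hx hs⟩
end
end

section
/- The maps 𝔤_k converge uniformly on Y (as k → ∞) to a map 𝔤 : Y → ℂ which satisfies 𝔤(𝓕(s,t)) = E_κ(𝔤(s,t)) for all (s,t) ∈ Y, together with the asymptotic estimate |𝔤(s,t) − (Log(Z(𝓕(s,t))) + 2πi·s₁)| ≤ e^{−t}·(2K + 2π + 4) for all (s,t) ∈ Y. -/
open Filter Topology ENNReal

noncomputable section

/-- The constant `Q(K) = max(log(4(K+π+3)), π+2)`. -/
def Qconst (K : ℝ) : ℝ := max (Real.log (4 * (K + Real.pi + 3))) (Real.pi + 2)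

/-- `Y_Q = {(s,t) ∈ X̄ : T(𝓕ⁿ(s,t)) ≥ Q for all n}`. -/
def Yset (Q : ℝ) : Set (Addr × ℝ) :=
  {p | p ∈ Xbar ∧ ∀ n : ℕ, Q ≤ (Fmod^[n] p).2}

/-- `Z(s,t) = t + 2πi s₁`. -/
def Zc (p : Addr × ℝ) : ℂ :=
  (p.2 : ℂ) + 2 * Real.pi * Complex.I * ((ofLex p.1 0 : ℤ) : ℂ)

/-- The approximating maps `𝔤_k`: `𝔤₀ = Z` and
`𝔤_{k+1}(s,t) = Log(𝔤_k(𝓕(s,t)) - κ) + 2πi s₁`, with `Log` the principal logarithm. -/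
def gmap (κ : ℂ) : ℕ → Addr × ℝ → ℂ
  | 0 => Zc
  | k + 1 => fun p =>
      Complex.log (gmap κ k (Fmod p) - κ) + 2 * Real.pi * Complex.I * ((ofLex p.1 0 : ℤ) : ℂ)

/-!
On `Y`, every point `𝔤_k(𝓕(s,t)) - κ` lies in the disk of radius `K + π + 2` about
`Z(𝓕(s,t))`, a centre of modulus comparable to `e^t` (its real part plus the modulus of its
imaginary part is `e^t - 1`). On that disk the principal logarithm is `4e^{-t}`-Lipschitz with
`4e^{-t} ≤ 1/2`, so the differences `𝔤_{k+1} - 𝔤_k` decay geometrically and the maps converge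
uniformly. The functional equation passes to the limit from `E_κ ∘ 𝔤_{k+1} = 𝔤_k ∘ 𝓕`, and the
estimate comes from `|Log w - Log Z| ≤ (4/3)|w - Z|/|Z|` for `w` close to `Z`.
-/

open scoped Real

lemma Real.abs_log_sub_le_log_of_le_of_le {x t c : ℝ} (hc : 0 < c)
    (hlo : Real.exp t / c ≤ x) (hhi : x ≤ c * Real.exp t) :
    |Real.log x - t| ≤ Real.log c := by
  have h₁ := Real.log_le_log (by positivity) hlo
  have h₂ := Real.log_le_log ((by positivity : 0 < Real.exp t / c).trans_le hlo) hhi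
  rw [Real.log_div (Real.exp_pos t).ne' hc.ne', Real.log_exp] at h₁
  rw [Real.log_mul hc.ne' (Real.exp_pos t).ne', Real.log_exp] at h₂
  exact abs_le.mpr ⟨by linarith, by linarith⟩

namespace Complex

lemma norm_log_sub_ofReal_le (w : ℂ) (t : ℝ) : ‖log w - t‖ ≤ |Real.log ‖w‖ - t| + π :=
  calc ‖log w - t‖ ≤ |(log w - t).re| + |(log w - t).im| := norm_le_abs_re_add_abs_im _
    _ = |Real.log ‖w‖ - t| + |arg w| := by simp only [sub_re, log_re, ofReal_re, sub_im,
        log_im, ofReal_im, sub_zero]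
    _ ≤ |Real.log ‖w‖ - t| + π := by gcongr; exact abs_arg_le_pi w

lemma norm_log_sub_ofReal_le_pi_add_two {w : ℂ} {t : ℝ} (hlo : Real.exp t / 4 ≤ ‖w‖)
    (hhi : ‖w‖ ≤ 2 * Real.exp t) : ‖log w - t‖ ≤ π + 2 := by
  have hlog4 : Real.log 4 ≤ 2 := by
    rw [show (4 : ℝ) = 2 ^ 2 by norm_num, Real.log_pow, Nat.cast_ofNat]
    linarith [Real.log_two_lt_d9]
  have hhi' : ‖w‖ ≤ 4 * Real.exp t := by linarith [Real.exp_pos t]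
  linarith [norm_log_sub_ofReal_le w t,
    Real.abs_log_sub_le_log_of_le_of_le (by norm_num) hlo hhi']

lemma norm_log_one_add_le_mul_self {z : ℂ} {c : ℝ} (hc : c < 1) (hz : ‖z‖ ≤ c) :
    ‖log (1 + z)‖ ≤ (1 + c / (2 * (1 - c))) * ‖z‖ := by
  have hc₀ : 0 < 1 - c := by linarith
  calc ‖log (1 + z)‖ ≤ ‖z‖ ^ 2 * (1 - ‖z‖)⁻¹ / 2 + ‖z‖ := norm_log_one_add_le (hz.trans_lt hc)
    _ ≤ ‖z‖ * c * (1 - c)⁻¹ / 2 + ‖z‖ := by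
        rw [sq]
        gcongr
        · exact inv_nonneg.mpr (by linarith)
        · exact mul_nonneg (norm_nonneg z) ((norm_nonneg z).trans hz)
    _ = (1 + c / (2 * (1 - c))) * ‖z‖ := by field_simp; ring

lemma norm_log_sub_log_le_of_re_pos {Z w : ℂ} {c : ℝ} (hZ : 0 < Z.re) (hc : c < 1)
    (hw : ‖w - Z‖ ≤ c * ‖Z‖) :
    ‖log w - log Z‖ ≤ (1 + c / (2 * (1 - c))) * (‖w - Z‖ / ‖Z‖) := by
  have hZ₀ : Z ≠ 0 := fun h => by simp [h] at hZ
  set v := (w - Z) / Z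
  have hv : ‖v‖ = ‖w - Z‖ / ‖Z‖ := norm_div _ _
  have hvc : ‖v‖ ≤ c := by rwa [hv, div_le_iff₀ (norm_pos_iff.mpr hZ₀)]
  have hv_re : 0 < (1 + v).re := by
    have := neg_le_of_abs_le ((abs_re_le_norm v).trans hvc)
    simp only [add_re, one_re]
    linarith
  have hargZ := abs_lt.mp (abs_arg_lt_pi_div_two_iff.mpr (Or.inl hZ))
  have hargv := abs_lt.mp (abs_arg_lt_pi_div_two_iff.mpr (Or.inl hv_re))
  have hlog : log w = log Z + log (1 + v) := by
    rw [show w = Z * (1 + v) by simp only [v]; field_simp; ring]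
    exact log_mul hZ₀ (fun h => by simp [h] at hv_re) ⟨by linarith, by linarith⟩
  rw [hlog, add_sub_cancel_left, ← hv]
  exact norm_log_one_add_le_mul_self hc hvc

lemma norm_log_sub_log_le_of_convex {s : Set ℂ} (hs : Convex ℝ s) (hslit : s ⊆ slitPlane)
    {r : ℝ} (hr : 0 < r) (hnorm : ∀ z ∈ s, r ≤ ‖z‖) {w₀ w₁ : ℂ} (h₀ : w₀ ∈ s) (h₁ : w₁ ∈ s) :
    ‖log w₁ - log w₀‖ ≤ r⁻¹ * ‖w₁ - w₀‖ :=
  hs.norm_image_sub_le_of_norm_hasDerivWithin_le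
    (fun z hz => (hasDerivAt_log (hslit hz)).hasDerivWithinAt)
    (fun z hz => by rw [norm_inv]; exact inv_anti₀ hr (hnorm z hz)) h₀ h₁

lemma sq_re_add_abs_im_le (Z : ℂ) : (Z.re + |Z.im|) ^ 2 ≤ 2 * ‖Z‖ ^ 2 := by
  rw [Complex.sq_norm, normSq_apply, ← abs_mul_abs_self Z.im]
  nlinarith [sq_nonneg (Z.re - |Z.im|)]

lemma mem_slitPlane_of_norm_sub_lt_max {z Z : ℂ} (h : ‖z - Z‖ < max Z.re |Z.im|) :
    z ∈ slitPlane := by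
  rcases lt_max_iff.mp h with h | h
  · left
    linarith [neg_abs_le (z - Z).re, abs_re_le_norm (z - Z), sub_re z Z]
  · right
    intro hz
    have := (abs_im_le_norm (z - Z)).trans_lt h
    rw [sub_im, hz, zero_sub, abs_neg] at this
    exact this.false

end Complex

lemma tendstoUniformlyOn_limUnder_of_dist_le_geometric {α β : Type*} [PseudoMetricSpace β]
    [CompleteSpace β] [Nonempty β] {f : ℕ → α → β} {s : Set α} {C r : ℝ} (hr₀ : 0 ≤ r) (hr : r < 1)
    (hf : ∀ x ∈ s, ∀ n, dist (f n x) (f (n + 1) x) ≤ C * r ^ n) :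
    TendstoUniformlyOn f (fun x => limUnder atTop (f · x)) atTop s := by
  have hbound : Tendsto (fun n => C * r ^ n / (1 - r)) atTop (𝓝 0) := by
    simpa using ((tendsto_pow_atTop_nhds_zero_of_lt_one hr₀ hr).const_mul C).div_const (1 - r)
  rw [Metric.tendstoUniformlyOn_iff]
  intro ε hε
  filter_upwards [hbound.eventually (gt_mem_nhds hε)] with n hn x hx
  rw [dist_comm]
  exact (dist_le_of_le_geometric_of_tendsto r C hr (hf x hx)
    (cauchySeq_of_le_geometric r C hr (hf x hx)).tendsto_limUnder n).trans_lt hn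

lemma Zc_re (p : Addr × ℝ) : (Zc p).re = p.2 := by simp [Zc]

lemma Zc_im (p : Addr × ℝ) : (Zc p).im = 2 * π * (ofLex p.1 0 : ℤ) := by simp [Zc]

lemma Zc_Fmod_re_add_abs_im (p : Addr × ℝ) :
    (Zc (Fmod p)).re + |(Zc (Fmod p)).im| = Real.exp p.2 - 1 := by
  rw [Zc_re, Zc_im, abs_mul, abs_of_pos Real.two_pi_pos]
  simp [Fmod, Fexp, shiftA]

lemma Fmod_mem_Yset {Q : ℝ} {p : Addr × ℝ} (hp : p ∈ Yset Q) : Fmod p ∈ Yset Q :=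
  ⟨fun n => by simpa only [Function.iterate_succ_apply] using hp.1 (n + 1),
    fun n => by simpa only [Function.iterate_succ_apply] using hp.2 (n + 1)⟩

lemma le_snd_of_mem_Yset {Q : ℝ} {p : Addr × ℝ} (hp : p ∈ Yset Q) : Q ≤ p.2 := hp.2 0

lemma four_mul_le_exp_of_Qconst_le {K t : ℝ} (ht : Qconst K ≤ t) :
    4 * (K + π + 3) ≤ Real.exp t :=
  (Real.le_exp_log _).trans (Real.exp_le_exp.mpr ((le_max_left _ _).trans ht))

lemma pi_add_two_le_of_Qconst_le {K t : ℝ} (ht : Qconst K ≤ t) : π + 2 ≤ t :=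
  (le_max_right _ _).trans ht

/-- The disk containing every `𝔤_k(𝓕 p) - κ` for `p ∈ Y`: its radius is the bound `π + 2` on
`‖𝔤_k - Z‖` plus the bound `K` on `‖κ‖`. -/
def levelDisk (K : ℝ) (p : Addr × ℝ) : Set ℂ := Metric.closedBall (Zc (Fmod p)) (K + π + 2)

section levelDisk

variable {K : ℝ} {p : Addr × ℝ}

lemma half_exp_sub_one_le_norm_Zc_Fmod (p : Addr × ℝ) :
    (Real.exp p.2 - 1) / 2 ≤ ‖Zc (Fmod p)‖ := by
  linarith [Zc_Fmod_re_add_abs_im p, le_abs_self (Zc (Fmod p)).re,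
    Complex.abs_re_le_norm (Zc (Fmod p)), Complex.abs_im_le_norm (Zc (Fmod p))]

lemma Zc_Fmod_re_pos (hp : p ∈ Yset (Qconst K)) : 0 < (Zc (Fmod p)).re := by
  have ht := le_snd_of_mem_Yset (Fmod_mem_Yset hp)
  rw [Zc_re]
  linarith [pi_add_two_le_of_Qconst_le ht, Real.pi_pos]

lemma levelDisk_subset_slitPlane (hp : p ∈ Yset (Qconst K)) :
    levelDisk K p ⊆ Complex.slitPlane := by
  intro z hz
  have hE := four_mul_le_exp_of_Qconst_le (le_snd_of_mem_Yset hp)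
  refine Complex.mem_slitPlane_of_norm_sub_lt_max
    ((mem_closedBall_iff_norm.mp hz).trans_lt ?_)
  linarith [Zc_Fmod_re_add_abs_im p, le_max_left (Zc (Fmod p)).re |(Zc (Fmod p)).im|,
    le_max_right (Zc (Fmod p)).re |(Zc (Fmod p)).im|, norm_nonneg (z - Zc (Fmod p)),
    mem_closedBall_iff_norm.mp hz]

lemma exp_div_four_le_norm_of_mem_levelDisk (hp : p ∈ Yset (Qconst K)) {z : ℂ}
    (hz : z ∈ levelDisk K p) : Real.exp p.2 / 4 ≤ ‖z‖ := by
  have hE := four_mul_le_exp_of_Qconst_le (le_snd_of_mem_Yset hp)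
  linarith [half_exp_sub_one_le_norm_Zc_Fmod p, norm_sub_norm_le (Zc (Fmod p)) z,
    norm_sub_rev (Zc (Fmod p)) z, mem_closedBall_iff_norm.mp hz]

lemma norm_le_two_mul_exp_of_mem_levelDisk (hp : p ∈ Yset (Qconst K)) {z : ℂ}
    (hz : z ∈ levelDisk K p) : ‖z‖ ≤ 2 * Real.exp p.2 := by
  have hE := four_mul_le_exp_of_Qconst_le (le_snd_of_mem_Yset hp)
  linarith [Zc_Fmod_re_add_abs_im p, abs_of_pos (Zc_Fmod_re_pos hp), Real.exp_pos p.2,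
    Complex.norm_le_abs_re_add_abs_im (Zc (Fmod p)), norm_le_norm_add_norm_sub' z (Zc (Fmod p)),
    mem_closedBall_iff_norm.mp hz]

lemma norm_log_sub_snd_le_of_mem_levelDisk (hp : p ∈ Yset (Qconst K)) {z : ℂ}
    (hz : z ∈ levelDisk K p) : ‖Complex.log z - p.2‖ ≤ π + 2 :=
  Complex.norm_log_sub_ofReal_le_pi_add_two (exp_div_four_le_norm_of_mem_levelDisk hp hz)
    (norm_le_two_mul_exp_of_mem_levelDisk hp hz)

lemma norm_log_sub_log_le_of_mem_levelDisk (hp : p ∈ Yset (Qconst K)) {w₀ w₁ : ℂ}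
    (h₀ : w₀ ∈ levelDisk K p) (h₁ : w₁ ∈ levelDisk K p) :
    ‖Complex.log w₁ - Complex.log w₀‖ ≤ (Real.exp p.2 / 4)⁻¹ * ‖w₁ - w₀‖ :=
  Complex.norm_log_sub_log_le_of_convex (convex_closedBall _ _) (levelDisk_subset_slitPlane hp)
    (by positivity) (fun _ => exp_div_four_le_norm_of_mem_levelDisk hp) h₀ h₁

lemma norm_log_sub_log_Zc_Fmod_le (hK : 2 * π + 6 < K) (hp : p ∈ Yset (Qconst K)) {z : ℂ}
    (hz : z ∈ levelDisk K p) :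
    ‖Complex.log z - Complex.log (Zc (Fmod p))‖ ≤ Real.exp (-p.2) * (2 * K + 2 * π + 4) := by
  set Z := Zc (Fmod p)
  have hE := four_mul_le_exp_of_Qconst_le (le_snd_of_mem_Yset hp)
  have hzZ : ‖z - Z‖ ≤ K + π + 2 := mem_closedBall_iff_norm.mp hz
  have hZE : 2 * Real.exp p.2 ≤ 3 * ‖Z‖ := by
    have h := Zc_Fmod_re_add_abs_im p ▸ Complex.sq_re_add_abs_im_le Z
    nlinarith [norm_nonneg Z, Real.pi_gt_three]
  have hZ : 0 < ‖Z‖ := by linarith [Real.exp_pos p.2]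
  have hclose : ‖z - Z‖ ≤ 2 / 5 * ‖Z‖ := by linarith [Real.pi_gt_three]
  calc ‖Complex.log z - Complex.log Z‖
      ≤ (1 + 2 / 5 / (2 * (1 - 2 / 5))) * (‖z - Z‖ / ‖Z‖) :=
        Complex.norm_log_sub_log_le_of_re_pos (Zc_Fmod_re_pos hp) (by norm_num) hclose
    _ ≤ 4 / 3 * ((K + π + 2) / ‖Z‖) := by norm_num; gcongr
    _ = 4 * (K + π + 2) / (3 * ‖Z‖) := by ring
    _ ≤ 4 * (K + π + 2) / (2 * Real.exp p.2) := by gcongr; linarith [Real.pi_pos]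
    _ = Real.exp (-p.2) * (2 * K + 2 * π + 4) := by
        rw [Real.exp_neg]
        field_simp
        ring

end levelDisk

section gmap

variable {κ : ℂ} {K : ℝ}

lemma gmap_succ_apply (κ : ℂ) (k : ℕ) (p : Addr × ℝ) :
    gmap κ (k + 1) p =
      Complex.log (gmap κ k (Fmod p) - κ) + 2 * π * Complex.I * ((ofLex p.1 0 : ℤ) : ℂ) :=
  rfl

lemma sub_mem_levelDisk {p : Addr × ℝ} {a : ℂ} (ha : ‖a - Zc (Fmod p)‖ ≤ π + 2)
    (hκ : ‖κ‖ ≤ K) : a - κ ∈ levelDisk K p := by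
  rw [levelDisk, mem_closedBall_iff_norm, sub_right_comm]
  linarith [norm_sub_le (a - Zc (Fmod p)) κ]

lemma norm_gmap_sub_Zc_le (hκ : ‖κ‖ ≤ K) (k : ℕ) :
    ∀ p ∈ Yset (Qconst K), ‖gmap κ k p - Zc p‖ ≤ π + 2 := by
  induction k with
  | zero => intro p _; rw [gmap, sub_self, norm_zero]; positivity
  | succ k ih =>
    intro p hp
    have hw := sub_mem_levelDisk (ih _ (Fmod_mem_Yset hp)) hκ
    calc ‖gmap κ (k + 1) p - Zc p‖ = ‖Complex.log (gmap κ k (Fmod p) - κ) - p.2‖ := by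
          rw [gmap_succ_apply, Zc]; ring_nf
      _ ≤ π + 2 := norm_log_sub_snd_le_of_mem_levelDisk hp hw

lemma gmap_Fmod_sub_mem_levelDisk (hκ : ‖κ‖ ≤ K) {p : Addr × ℝ} (hp : p ∈ Yset (Qconst K))
    (k : ℕ) : gmap κ k (Fmod p) - κ ∈ levelDisk K p :=
  sub_mem_levelDisk (norm_gmap_sub_Zc_le hκ k _ (Fmod_mem_Yset hp)) hκ

lemma norm_gmap_succ_sub_le (hκ : ‖κ‖ ≤ K) (k : ℕ) :
    ∀ p ∈ Yset (Qconst K), ‖gmap κ (k + 1) p - gmap κ k p‖ ≤ (2 * π + 4) * (1 / 2) ^ k := by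
  induction k with
  | zero =>
    intro p hp
    rw [pow_zero, mul_one]
    exact (norm_gmap_sub_Zc_le hκ 1 p hp).trans (by linarith [Real.pi_pos])
  | succ k ih =>
    intro p hp
    have hE := four_mul_le_exp_of_Qconst_le (le_snd_of_mem_Yset hp)
    have hlip : (Real.exp p.2 / 4)⁻¹ ≤ 1 / 2 := by
      rw [inv_div, div_le_div_iff₀ (Real.exp_pos _) two_pos]
      linarith [norm_nonneg κ, Real.pi_pos]
    calc ‖gmap κ (k + 1 + 1) p - gmap κ (k + 1) p‖
        = ‖Complex.log (gmap κ (k + 1) (Fmod p) - κ) - Complex.log (gmap κ k (Fmod p) - κ)‖ := by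
          rw [gmap_succ_apply κ (k + 1) p, gmap_succ_apply κ k p, add_sub_add_right_eq_sub]
      _ ≤ (Real.exp p.2 / 4)⁻¹ * ‖gmap κ (k + 1) (Fmod p) - gmap κ k (Fmod p)‖ := by
          simpa only [sub_sub_sub_cancel_right] using norm_log_sub_log_le_of_mem_levelDisk hp
            (gmap_Fmod_sub_mem_levelDisk hκ hp k) (gmap_Fmod_sub_mem_levelDisk hκ hp (k + 1))
      _ ≤ 1 / 2 * ((2 * π + 4) * (1 / 2) ^ k) := by
          gcongr
          exact ih _ (Fmod_mem_Yset hp)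
      _ = (2 * π + 4) * (1 / 2) ^ (k + 1) := by ring

lemma gmap_Fmod_eq_Eexp (hκ : ‖κ‖ ≤ K) {p : Addr × ℝ} (hp : p ∈ Yset (Qconst K)) (k : ℕ) :
    gmap κ k (Fmod p) = Eexp κ (gmap κ (k + 1) p) := by
  have hw := gmap_Fmod_sub_mem_levelDisk hκ hp k
  have hw₀ : gmap κ k (Fmod p) - κ ≠ 0 := fun h => by
    have := exp_div_four_le_norm_of_mem_levelDisk hp hw
    rw [h, norm_zero] at this
    linarith [Real.exp_pos p.2]
  rw [Eexp, gmap_succ_apply, Complex.exp_add, Complex.exp_log hw₀,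
    show 2 * (π : ℂ) * Complex.I * ((ofLex p.1 0 : ℤ) : ℂ) = (ofLex p.1 0 : ℤ) * (2 * π * Complex.I)
      by ring, Complex.exp_int_mul_two_pi_mul_I]
  ring

lemma norm_gmap_succ_sub_log_Zc_Fmod_le (hK : 2 * π + 6 < K) (hκ : ‖κ‖ ≤ K)
    {p : Addr × ℝ} (hp : p ∈ Yset (Qconst K)) (k : ℕ) :
    ‖gmap κ (k + 1) p - (Complex.log (Zc (Fmod p)) +
        2 * π * Complex.I * ((ofLex p.1 0 : ℤ) : ℂ))‖
      ≤ Real.exp (-p.2) * (2 * K + 2 * π + 4) := by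
  rw [gmap_succ_apply, add_sub_add_right_eq_sub]
  exact norm_log_sub_log_Zc_Fmod_le hK hp (gmap_Fmod_sub_mem_levelDisk hκ hp k)

end gmap

lemma continuous_Eexp (κ : ℂ) : Continuous (Eexp κ) :=
  Complex.continuous_exp.add continuous_const

/-- **Convergence to a conjugacy** (Theorem 4.2, first part): on `Y` the maps `𝔤_k`
converge uniformly to a map `𝔤` with `𝔤 ∘ 𝓕 = E_κ ∘ 𝔤` on `Y` and
`|𝔤(s,t) - (Log(Z(𝓕(s,t))) + 2πi s₁)| ≤ e^{-t} (2K + 2π + 4)`. -/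
theorem gmap_uniform_convergence (κ : ℂ) (K : ℝ) (hK : 2 * Real.pi + 6 < K)
    (hκ : ‖κ‖ ≤ K) :
    ∃ g : Addr × ℝ → ℂ,
      TendstoUniformlyOn (gmap κ) g atTop (Yset (Qconst K)) ∧
      (∀ p ∈ Yset (Qconst K), g (Fmod p) = Eexp κ (g p)) ∧
      (∀ p ∈ Yset (Qconst K),
        ‖g p - (Complex.log (Zc (Fmod p)) +
            2 * Real.pi * Complex.I * ((ofLex p.1 0 : ℤ) : ℂ))‖
          ≤ Real.exp (-p.2) * (2 * K + 2 * Real.pi + 4)) := by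
  have hunif : TendstoUniformlyOn (gmap κ) _ atTop (Yset (Qconst K)) :=
    tendstoUniformlyOn_limUnder_of_dist_le_geometric (C := 2 * π + 4) (r := 1 / 2)
      (by norm_num) (by norm_num)
      fun p hp k => by rw [dist_comm, dist_eq_norm]; exact norm_gmap_succ_sub_le hκ k p hp
  refine ⟨_, hunif, fun p hp => ?_, fun p hp => ?_⟩
  · have hshift := (hunif.tendsto_at hp).comp (tendsto_add_atTop_nat 1)
    exact tendsto_nhds_unique
      ((hunif.tendsto_at (Fmod_mem_Yset hp)).congr (gmap_Fmod_eq_Eexp hκ hp))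
      (((continuous_Eexp κ).tendsto _).comp hshift)
  · exact le_of_tendsto
      (((hunif.tendsto_at hp).comp (tendsto_add_atTop_nat 1)).sub_const _).norm
      (Eventually.of_forall (norm_gmap_succ_sub_log_Zc_Fmod_le hK hκ hp))
end
end
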